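/- arXiv:1403.8120 — 2 statements merged into one kernel-verified Lean document; each statement's English description precedes it below -/
import Mathlib

section
/- Let t ∈ (0,1), and for each n let Z_{n,1},…,Z_{n,n} be independent ℝ^d-valued random vectors with Z_{n,j} distributed according to P1 for j ≤ ⌊nt⌋ and according to P2 for j > ⌊nt⌋, where P1, P2 have finite second moments and common covariance matrix Σ. Then lim_{n→∞} n ∫₀¹ E[ ‖Û_n(s) − E Û_n(s)‖² ] ds = tr(Σ)/6. -/
/-! `Û_n(s) = ∑_j w_j(s) Z_{n,j}` with deterministic weights `w_j(s) = (𝟙[j < ⌊ns⌋] - s) / n`, so by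
independence its total variance is `tr Σ · ∑_j w_j(s)²`, whatever the two means are. That sum is
`(⌊ns⌋ (1 - 2s) + n s²) / n²`, which is `(s - s²) / n` up to `1 / n²` uniformly on `[0, 1]`, and
`∫₀¹ (s - s²) ds = 1 / 6`. -/

open MeasureTheory ProbabilityTheory Filter Topology Finset

section TotalVariance

variable {ι κ Ω : Type*} [Fintype ι] [MeasurableSpace Ω] {P : Measure Ω}

lemma integral_norm_sub_integral_sq_eq_sum_variance [IsFiniteMeasure P]
    {X : Ω → EuclideanSpace ℝ ι} (hX : MemLp X 2 P) :
    ∫ ω, ‖X ω - ∫ ω', X ω' ∂P‖ ^ 2 ∂P = ∑ i, variance (fun ω => X ω i) P := by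
  have hXi : ∀ i, MemLp (fun ω => X ω i) 2 P := fun i =>
    (EuclideanSpace.proj (𝕜 := ℝ) i).comp_memLp' hX
  have hmean : ∀ i, (∫ ω, X ω ∂P) i = ∫ ω, X ω i ∂P := fun i =>
    ((EuclideanSpace.proj (𝕜 := ℝ) i).integral_comp_comm (hX.integrable one_le_two)).symm
  simp_rw [EuclideanSpace.real_norm_sq_eq, PiLp.sub_apply, hmean]
  rw [integral_finsetSum _ fun i _ => ?_]
  · exact Finset.sum_congr rfl fun i _ => (variance_eq_integral (hXi i).aemeasurable).symm
  · exact ((hXi i).sub (memLp_const _)).integrable_sq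

lemma ProbabilityTheory.iIndepFun.integral_norm_sub_integral_sq_sum_smul [Fintype κ]
    [IsProbabilityMeasure P]
    {Z : κ → Ω → EuclideanSpace ℝ ι} (hindep : iIndepFun Z P) (hZ : ∀ j, MemLp (Z j) 2 P)
    (a : κ → ℝ) :
    ∫ ω, ‖∑ j, a j • Z j ω - ∫ ω', ∑ j, a j • Z j ω' ∂P‖ ^ 2 ∂P
      = ∑ j, a j ^ 2 * ∫ ω, ‖Z j ω - ∫ ω', Z j ω' ∂P‖ ^ 2 ∂P := by
  have hsum : MemLp (fun ω => ∑ j, a j • Z j ω) 2 P :=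
    memLp_finsetSum _ fun j _ => (hZ j).const_smul (a j)
  have hZi : ∀ j i, MemLp (fun ω => Z j ω i) 2 P := fun j i =>
    (EuclideanSpace.proj (𝕜 := ℝ) i).comp_memLp' (hZ j)
  rw [integral_norm_sub_integral_sq_eq_sum_variance hsum]
  simp_rw [integral_norm_sub_integral_sq_eq_sum_variance (hZ _), Finset.mul_sum]
  rw [Finset.sum_comm]
  refine Finset.sum_congr rfl fun i _ => ?_
  have hcoord : (fun ω => (∑ j, a j • Z j ω) i) = ∑ j, fun ω => a j * Z j ω i := by
    ext ω; simp [Finset.sum_apply]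
  rw [hcoord, IndepFun.variance_sum (fun j _ => (hZi j i).const_mul (a j))]
  · exact Finset.sum_congr rfl fun j _ => variance_const_mul _ _ _
  · intro j _ k _ hjk
    have hproj : Measurable fun z : EuclideanSpace ℝ ι => z i := by fun_prop
    exact (hindep.indepFun hjk).comp (measurable_const.mul hproj) (measurable_const.mul hproj)

lemma integral_norm_sub_integral_sq_map {E : Type*} [NormedAddCommGroup E] [NormedSpace ℝ E]
    [MeasurableSpace E] [BorelSpace E] [SecondCountableTopology E] {X : Ω → E}
    (hX : AEMeasurable X P) :
    ∫ ω, ‖X ω - ∫ ω', X ω' ∂P‖ ^ 2 ∂P = ∫ z, ‖z - ∫ z', z' ∂(P.map X)‖ ^ 2 ∂(P.map X) := by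
  have hmean : ∫ z, z ∂(P.map X) = ∫ ω, X ω ∂P := integral_map hX aestronglyMeasurable_id
  rw [hmean, integral_map hX (by fun_prop)]

lemma integral_norm_sub_sq_eq_trace {Q : Measure (EuclideanSpace ℝ ι)} [IsFiniteMeasure Q]
    (hQ : MemLp id 2 Q) (μ : EuclideanSpace ℝ ι) (Sig : Matrix ι ι ℝ)
    (hSig : ∀ i, Sig i i = ∫ z, (z i - μ i) * (z i - μ i) ∂Q) :
    ∫ z, ‖z - μ‖ ^ 2 ∂Q = Sig.trace := by
  have hQi : ∀ i, MemLp (fun z : EuclideanSpace ℝ ι => z i - μ i) 2 Q := fun i =>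
    ((EuclideanSpace.proj (𝕜 := ℝ) i).comp_memLp' hQ).sub (memLp_const _)
  simp_rw [EuclideanSpace.real_norm_sq_eq, PiLp.sub_apply]
  rw [integral_finsetSum _ fun i _ => (hQi i).integrable_sq]
  simp_rw [Matrix.trace, Matrix.diag, hSig, sq]

end TotalVariance

noncomputable def cusumWeight (n : ℕ) (s : ℝ) (j : ℕ) : ℝ :=
  ((if j < ⌊(n : ℝ) * s⌋₊ then 1 else 0) - s) / n

lemma cusum_eq_sum_cusumWeight_smul {E : Type*} [AddCommGroup E] [Module ℝ E] (n : ℕ) (s : ℝ)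
    (z : Fin n → E) :
    ((1 : ℝ) / n) • (∑ j ∈ univ.filter (fun j : Fin n => (j : ℕ) < ⌊(n : ℝ) * s⌋₊), z j)
      - (s / n) • (∑ j, z j) = ∑ j : Fin n, cusumWeight n s j • z j := by
  rw [Finset.sum_filter, Finset.smul_sum, Finset.smul_sum, ← Finset.sum_sub_distrib]
  refine Finset.sum_congr rfl fun j _ => ?_
  unfold cusumWeight
  split_ifs <;> module

lemma sum_cusumWeight_sq {n : ℕ} {s : ℝ} (hs1 : s ≤ 1) :
    ∑ j : Fin n, cusumWeight n s j ^ 2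
      = ((⌊(n : ℝ) * s⌋₊ : ℝ) * (1 - 2 * s) + n * s ^ 2) / (n : ℝ) ^ 2 := by
  have hfloor : ⌊(n : ℝ) * s⌋₊ ≤ n :=
    Nat.floor_le_of_le (mul_le_of_le_one_right n.cast_nonneg hs1)
  have hterm : ∀ j : Fin n, cusumWeight n s j ^ 2
      = ((if (j : ℕ) < ⌊(n : ℝ) * s⌋₊ then 1 - 2 * s else 0) + s ^ 2) / (n : ℝ) ^ 2 := by
    intro j
    unfold cusumWeight
    split_ifs <;> ring
  simp_rw [hterm, ← Finset.sum_div, Finset.sum_add_distrib, ← Finset.sum_filter,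
    Finset.sum_const, Fin.card_filter_val_lt, min_eq_right hfloor, Finset.card_univ,
    Fintype.card_fin, nsmul_eq_mul]

lemma abs_mul_sum_cusumWeight_sq_sub_le {n : ℕ} (hn : 0 < n) {s : ℝ} (hs0 : 0 ≤ s)
    (hs1 : s ≤ 1) :
    |n * ∑ j : Fin n, cusumWeight n s j ^ 2 - (s - s ^ 2)| ≤ 1 / n := by
  have hn' : (0 : ℝ) < n := by exact_mod_cast hn
  have hfloor_le : (⌊(n : ℝ) * s⌋₊ : ℝ) ≤ n * s := Nat.floor_le (by positivity)
  have hlt_floor : n * s < (⌊(n : ℝ) * s⌋₊ : ℝ) + 1 := Nat.lt_floor_add_one _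
  have hexpand : n * ∑ j : Fin n, cusumWeight n s j ^ 2 - (s - s ^ 2)
      = (⌊(n : ℝ) * s⌋₊ - n * s) * (1 - 2 * s) / n := by
    rw [sum_cusumWeight_sq hs1]
    field_simp
    ring
  rw [hexpand, abs_div, abs_mul, abs_of_pos hn']
  gcongr
  exact mul_le_one₀ (abs_le.2 ⟨by linarith, by linarith⟩) (abs_nonneg _)
    (abs_le.2 ⟨by linarith, by linarith⟩)

lemma intervalIntegrable_sum_cusumWeight_sq (n : ℕ) :
    IntervalIntegrable (fun s => ∑ j : Fin n, cusumWeight n s j ^ 2) volume 0 1 := by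
  have hterm (j : Fin n) : IntervalIntegrable (fun s => cusumWeight n s j ^ 2) volume 0 1 := by
    rw [intervalIntegrable_iff_integrableOn_Ioc_of_le zero_le_one]
    refine IntegrableOn.of_bound measure_Ioc_lt_top ?_ (1 / (n : ℝ) ^ 2) ?_
    · have hstep : Measurable fun s : ℝ => if (j : ℕ) < ⌊(n : ℝ) * s⌋₊ then (1 : ℝ) else 0 :=
        Measurable.ite
          (measurableSet_lt measurable_const (measurable_const.mul measurable_id).nat_floor)
          measurable_const measurable_const
      exact (((hstep.sub measurable_id).div_const _).pow_const 2).aestronglyMeasurable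
    · refine (ae_restrict_iff' measurableSet_Ioc).2 (ae_of_all _ fun s ⟨hs0, hs1⟩ => ?_)
      rw [Real.norm_eq_abs, abs_pow, cusumWeight, abs_div, div_pow, Nat.abs_cast]
      gcongr
      rw [sq_abs]
      split_ifs <;> nlinarith
  simpa only [Finset.sum_fn] using IntervalIntegrable.sum univ fun j _ => hterm j

lemma tendsto_mul_integral_sum_cusumWeight_sq :
    Tendsto (fun n : ℕ => n * ∫ s in (0 : ℝ)..1, ∑ j : Fin n, cusumWeight n s j ^ 2)
      atTop (𝓝 (1 / 6)) := by
  have hlimit : ∫ s in (0 : ℝ)..1, (s - s ^ 2) = 1 / 6 := by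
    rw [intervalIntegral.integral_sub intervalIntegral.intervalIntegrable_id
      ((continuous_pow 2).intervalIntegrable _ _), integral_id, integral_pow]
    norm_num
  rw [← hlimit, tendsto_iff_norm_sub_tendsto_zero]
  refine squeeze_zero_norm' ?_ tendsto_one_div_atTop_nhds_zero_nat
  filter_upwards [eventually_gt_atTop 0] with n hn
  rw [← intervalIntegral.integral_const_mul, ← intervalIntegral.integral_sub
    ((intervalIntegrable_sum_cusumWeight_sq n).const_mul _)
    ((by fun_prop : Continuous fun s : ℝ => s - s ^ 2).intervalIntegrable _ _), norm_norm]
  have hbound : ∀ s ∈ Set.uIoc (0 : ℝ) 1,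
      ‖n * ∑ j : Fin n, cusumWeight n s j ^ 2 - (s - s ^ 2)‖ ≤ 1 / n := by
    intro s hs
    rw [Set.uIoc_of_le zero_le_one] at hs
    exact abs_mul_sum_cusumWeight_sq_sub_le hn hs.1.le hs.2
  simpa using intervalIntegral.norm_integral_le_of_norm_le_const hbound

theorem cusum_integrated_variance_limit_general
    (d : ℕ) (t : ℝ)
    (P1 P2 : Measure (EuclideanSpace ℝ (Fin d)))
    [IsProbabilityMeasure P1] [IsProbabilityMeasure P2]
    (hP1 : MemLp id 2 P1) (hP2 : MemLp id 2 P2)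
    (μ1 μ2 : EuclideanSpace ℝ (Fin d))
    (hμ1 : μ1 = ∫ z, z ∂P1) (hμ2 : μ2 = ∫ z, z ∂P2)
    (Sig : Matrix (Fin d) (Fin d) ℝ)
    (hSig1 : ∀ i j, Sig i j = ∫ z, (z i - μ1 i) * (z j - μ1 j) ∂P1)
    (hSig2 : ∀ i j, Sig i j = ∫ z, (z i - μ2 i) * (z j - μ2 j) ∂P2)
    (Ω : ℕ → Type) (mΩ : ∀ n, MeasurableSpace (Ω n))
    (P : ∀ n, Measure (Ω n)) (hP : ∀ n, IsProbabilityMeasure (P n))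
    (Z : ∀ n : ℕ, Fin n → Ω n → EuclideanSpace ℝ (Fin d))
    (hmeas : ∀ n j, Measurable (Z n j))
    (hindep : ∀ n, iIndepFun (Z n) (P n))
    (hlaw : ∀ n (j : Fin n), Measure.map (Z n j) (P n) =
      if (j : ℕ) < ⌊(n : ℝ) * t⌋₊ then P1 else P2)
    (U : ∀ n : ℕ, ℝ → Ω n → EuclideanSpace ℝ (Fin d))
    (hU : ∀ n s ω, U n s ω =
      ((1 : ℝ) / n) • (∑ j ∈ Finset.univ.filter (fun j : Fin n => (j : ℕ) < ⌊(n : ℝ) * s⌋₊),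
        Z n j ω)
      - (s / n) • (∑ j, Z n j ω)) :
    Tendsto (fun (n : ℕ) => (n : ℝ) *
        ∫ s in (0:ℝ)..1, ∫ ω, ‖U n s ω - ∫ ω', U n s ω' ∂(P n)‖ ^ 2 ∂(P n)) atTop
      (𝓝 (Sig.trace / 6)) := by
  have hZ_memLp (n : ℕ) (j : Fin n) : MemLp (Z n j) 2 (P n) := by
    refine (memLp_map_measure_iff aestronglyMeasurable_id (hmeas n j).aemeasurable).1 ?_
    rw [hlaw n j]
    split_ifs
    exacts [hP1, hP2]
  have hZ_var (n : ℕ) (j : Fin n) :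
      ∫ ω, ‖Z n j ω - ∫ ω', Z n j ω' ∂(P n)‖ ^ 2 ∂(P n) = Sig.trace := by
    rw [integral_norm_sub_integral_sq_map (hmeas n j).aemeasurable, hlaw n j]
    split_ifs
    · rw [← hμ1]
      exact integral_norm_sub_sq_eq_trace hP1 μ1 Sig fun i => hSig1 i i
    · rw [← hμ2]
      exact integral_norm_sub_sq_eq_trace hP2 μ2 Sig fun i => hSig2 i i
  have hU_var (n : ℕ) (s : ℝ) :
      ∫ ω, ‖U n s ω - ∫ ω', U n s ω' ∂(P n)‖ ^ 2 ∂(P n)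
        = Sig.trace * ∑ j : Fin n, cusumWeight n s j ^ 2 := by
    have := hP n
    simp_rw [hU, cusum_eq_sum_cusumWeight_smul]
    rw [(hindep n).integral_norm_sub_integral_sq_sum_smul (hZ_memLp n), Finset.mul_sum]
    simp_rw [hZ_var, mul_comm]
  simp_rw [hU_var, intervalIntegral.integral_const_mul, mul_left_comm _ Sig.trace]
  rw [← mul_one_div]
  exact tendsto_mul_integral_sum_cusumWeight_sq.const_mul Sig.trace

/-- Under a change-point at `t ∈ (0,1)` with common covariance matrix `Sig`,
`lim_n n ∫₀¹ E[‖Û_n(s) - E Û_n(s)‖²] ds = tr(Σ)/6`. -/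
theorem cusum_integrated_variance_limit
    (d : ℕ) (t : ℝ) (ht0 : 0 < t) (ht1 : t < 1)
    (P1 P2 : Measure (EuclideanSpace ℝ (Fin d)))
    [IsProbabilityMeasure P1] [IsProbabilityMeasure P2]
    (hP1 : MemLp id 2 P1) (hP2 : MemLp id 2 P2)
    (μ1 μ2 : EuclideanSpace ℝ (Fin d))
    (hμ1 : μ1 = ∫ z, z ∂P1) (hμ2 : μ2 = ∫ z, z ∂P2)
    (Sig : Matrix (Fin d) (Fin d) ℝ)
    (hSig1 : ∀ i j, Sig i j = ∫ z, (z i - μ1 i) * (z j - μ1 j) ∂P1)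
    (hSig2 : ∀ i j, Sig i j = ∫ z, (z i - μ2 i) * (z j - μ2 j) ∂P2)
    (Ω : ℕ → Type) (mΩ : ∀ n, MeasurableSpace (Ω n))
    (P : ∀ n, Measure (Ω n)) (hP : ∀ n, IsProbabilityMeasure (P n))
    (Z : ∀ n : ℕ, Fin n → Ω n → EuclideanSpace ℝ (Fin d))
    (hmeas : ∀ n j, Measurable (Z n j))
    (hindep : ∀ n, iIndepFun (Z n) (P n))
    (hlaw : ∀ n (j : Fin n), Measure.map (Z n j) (P n) =
      if (j : ℕ) < ⌊(n : ℝ) * t⌋₊ then P1 else P2)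
    (U : ∀ n : ℕ, ℝ → Ω n → EuclideanSpace ℝ (Fin d))
    (hU : ∀ n s ω, U n s ω =
      ((1 : ℝ) / n) • (∑ j ∈ Finset.univ.filter (fun j : Fin n => (j : ℕ) < ⌊(n : ℝ) * s⌋₊),
        Z n j ω)
      - (s / n) • (∑ j, Z n j ω)) :
    Tendsto (fun (n : ℕ) => (n : ℝ) *
        ∫ s in (0:ℝ)..1, ∫ ω, ‖U n s ω - ∫ ω', U n s ω' ∂(P n)‖ ^ 2 ∂(P n)) atTop
      (𝓝 (Sig.trace / 6)) :=
  cusum_integrated_variance_limit_general d t P1 P2 hP1 hP2 μ1 μ2 hμ1 hμ2 Sig hSig1 hSig2 Ω mΩ P hP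
    Z hmeas hindep hlaw U hU
end

section
/- For every t ∈ [0,1], ∫₀¹ ∫₀¹ (min(s1,t) − s1 t)(min(s2,t) − s2 t) · [ max(min(s1,s2) − t, 0) + s1 s2 (1−t) − s1·max(s2 − t, 0) − s2·max(s1 − t, 0) ] ds1 ds2 = t²(1−t)²(1 − 3t + 8t² − 6t³)/45. -/
/-!
The integrand is a polynomial on each cell cut out of `[0,1]²` by the lines `s₁ = t`, `s₂ = t` and
`s₁ = s₂`. Integrating `cusumDrift t s₂ * postChangeKernel t s₁ s₂` over `s₂` gives
`s₁ t² (1-t)² / 3` for `s₁ ≤ t` and `t (1-s₁) ((1-t)(1-t+2t²) - (1-s₁)²) / 6` for `s₁ ≥ t`, so the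
outer integral is again a polynomial integral over `[0,t]` and `[t,1]`.
-/

open intervalIntegral Set
open scoped Interval

theorem integral_one_sub_pow (a b : ℝ) (n : ℕ) :
    ∫ x in a..b, (1 - x) ^ n = ((1 - a) ^ (n + 1) - (1 - b) ^ (n + 1)) / (n + 1) := by
  rw [integral_comp_sub_left (fun x => x ^ n), integral_pow]

theorem integral_eq_add_of_eqOn_Icc {f g h : ℝ → ℝ} {a b c : ℝ} (hab : a ≤ b) (hbc : b ≤ c)
    (hg : Continuous g) (hh : Continuous h) (hfg : ∀ x ∈ Icc a b, f x = g x)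
    (hfh : ∀ x ∈ Icc b c, f x = h x) :
    ∫ x in a..c, f x = (∫ x in a..b, g x) + ∫ x in b..c, h x := by
  rw [← uIcc_of_le hab] at hfg
  rw [← uIcc_of_le hbc] at hfh
  rw [← integral_add_adjacent_intervals (hg.continuousOn.congr hfg).intervalIntegrable
    (hh.continuousOn.congr hfh).intervalIntegrable, integral_congr hfg, integral_congr hfh]

def cusumDrift (t s : ℝ) : ℝ := min s t - s * t

def postChangeKernel (t s₁ s₂ : ℝ) : ℝ :=
  max (min s₁ s₂ - t) 0 + s₁ * s₂ * (1 - t) - s₁ * max (s₂ - t) 0 - s₂ * max (s₁ - t) 0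

section

variable {t s s₁ s₂ : ℝ}

theorem cusumDrift_of_le (h : s ≤ t) : cusumDrift t s = s * (1 - t) := by
  rw [cusumDrift, min_eq_left h]; ring

theorem cusumDrift_of_ge (h : t ≤ s) : cusumDrift t s = t * (1 - s) := by
  rw [cusumDrift, min_eq_right h]; ring

theorem postChangeKernel_comm : postChangeKernel t s₁ s₂ = postChangeKernel t s₂ s₁ := by
  rw [postChangeKernel, postChangeKernel, min_comm]; ring

theorem postChangeKernel_of_le_of_le (h₁ : s₁ ≤ t) (h₂ : s₂ ≤ t) :
    postChangeKernel t s₁ s₂ = s₁ * s₂ * (1 - t) := by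
  have hmin : min s₁ s₂ - t ≤ 0 := by linarith [min_le_left s₁ s₂]
  rw [postChangeKernel, max_eq_right hmin, max_eq_right (by linarith), max_eq_right (by linarith)]
  ring

theorem postChangeKernel_of_le_of_ge (h₁ : s₁ ≤ t) (h₂ : t ≤ s₂) :
    postChangeKernel t s₁ s₂ = s₁ * t * (1 - s₂) := by
  have hmin : min s₁ s₂ - t ≤ 0 := by linarith [min_le_left s₁ s₂]
  rw [postChangeKernel, max_eq_right hmin, max_eq_left (by linarith), max_eq_right (by linarith)]
  ring

theorem postChangeKernel_of_ge_of_le (ht : t ≤ s₂) (h : s₂ ≤ s₁) :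
    postChangeKernel t s₁ s₂ = (1 - s₁) * (s₂ * (1 + t) - t) := by
  rw [postChangeKernel, min_eq_right h, max_eq_left (by linarith), max_eq_left (by linarith)]
  ring

theorem integral_cusumDrift_mul_postChangeKernel_of_le (ht₀ : 0 ≤ t) (ht₁ : t ≤ 1)
    (hs : s ≤ t) :
    ∫ x in (0:ℝ)..1, cusumDrift t x * postChangeKernel t s x = s * t ^ 2 * (1 - t) ^ 2 / 3 := by
  have hlo : ∀ x ∈ Icc 0 t, cusumDrift t x * postChangeKernel t s x = s * (1 - t) ^ 2 * x ^ 2 := by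
    intro x hx
    rw [cusumDrift_of_le hx.2, postChangeKernel_of_le_of_le hs hx.2]
    ring
  have hhi : ∀ x ∈ Icc t 1, cusumDrift t x * postChangeKernel t s x = s * t ^ 2 * (1 - x) ^ 2 := by
    intro x hx
    rw [cusumDrift_of_ge hx.1, postChangeKernel_of_le_of_ge hs hx.1]
    ring
  rw [integral_eq_add_of_eqOn_Icc ht₀ ht₁ (by fun_prop) (by fun_prop) hlo hhi, integral_const_mul,
    integral_const_mul, integral_pow, integral_one_sub_pow]
  ring

theorem integral_cusumDrift_mul_postChangeKernel_of_ge (ht₀ : 0 ≤ t) (hs₀ : t ≤ s)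
    (hs₁ : s ≤ 1) :
    ∫ x in (0:ℝ)..1, cusumDrift t x * postChangeKernel t s x =
      t * (1 - s) * ((1 - t) * (1 - t + 2 * t ^ 2) - (1 - s) ^ 2) / 6 := by
  have hlo : ∀ x ∈ Icc 0 t,
      cusumDrift t x * postChangeKernel t s x = t * (1 - t) * (1 - s) * x ^ 2 := by
    intro x hx
    rw [cusumDrift_of_le hx.2, postChangeKernel_comm, postChangeKernel_of_le_of_ge hx.2 hs₀]
    ring
  have hmid : ∀ x ∈ Icc t s, cusumDrift t x * postChangeKernel t s x =
      t * (1 - s) * (1 - x) ^ 1 - t * (1 - s) * (1 + t) * (1 - x) ^ 2 := by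
    intro x hx
    rw [cusumDrift_of_ge hx.1, postChangeKernel_of_ge_of_le hx.1 hx.2]
    ring
  have hhi : ∀ x ∈ Icc s 1,
      cusumDrift t x * postChangeKernel t s x = t * (s * (1 + t) - t) * (1 - x) ^ 2 := by
    intro x hx
    rw [cusumDrift_of_ge (hs₀.trans hx.1), postChangeKernel_comm,
      postChangeKernel_of_ge_of_le hs₀ hx.1]
    ring
  have hcont : Continuous fun x => cusumDrift t x * postChangeKernel t s x := by
    unfold cusumDrift postChangeKernel; fun_prop
  rw [integral_eq_add_of_eqOn_Icc (ht₀.trans hs₀) hs₁ hcont (by fun_prop) (fun _ _ => rfl) hhi,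
    integral_eq_add_of_eqOn_Icc ht₀ hs₀ (by fun_prop) (by fun_prop) hlo hmid,
    integral_sub (Continuous.intervalIntegrable (by fun_prop) _ _)
      (Continuous.intervalIntegrable (by fun_prop) _ _)]
  simp only [integral_const_mul, integral_pow, integral_one_sub_pow]
  ring

end

/-- For every `t ∈ [0,1]`,
`∫₀¹∫₀¹ (min(s1,t) - s1 t)(min(s2,t) - s2 t)[(min(s1,s2) - t)₊ + s1 s2 (1-t)
  - s1 (s2-t)₊ - s2 (s1-t)₊] ds1 ds2 = t²(1-t)²(1 - 3t + 8t² - 6t³)/45`. -/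
theorem double_integral_postchange_kernel (t : ℝ) (ht : t ∈ Set.Icc (0:ℝ) 1) :
    (∫ s1 in (0:ℝ)..1, ∫ s2 in (0:ℝ)..1,
      (min s1 t - s1 * t) * (min s2 t - s2 * t) *
        (max (min s1 s2 - t) 0 + s1 * s2 * (1 - t) - s1 * max (s2 - t) 0
          - s2 * max (s1 - t) 0))
      = t ^ 2 * (1 - t) ^ 2 * (1 - 3 * t + 8 * t ^ 2 - 6 * t ^ 3) / 45 := by
  obtain ⟨ht₀, ht₁⟩ := ht
  change ∫ s1 in (0:ℝ)..1, ∫ s2 in (0:ℝ)..1,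
    cusumDrift t s1 * cusumDrift t s2 * postChangeKernel t s1 s2 = _
  simp_rw [mul_assoc, integral_const_mul]
  have hlo : ∀ s ∈ Icc 0 t,
      cusumDrift t s * ∫ x in (0:ℝ)..1, cusumDrift t x * postChangeKernel t s x =
        t ^ 2 * (1 - t) ^ 3 / 3 * s ^ 2 := by
    intro s hs
    rw [cusumDrift_of_le hs.2, integral_cusumDrift_mul_postChangeKernel_of_le ht₀ ht₁ hs.2]
    ring
  have hhi : ∀ s ∈ Icc t 1,
      cusumDrift t s * ∫ x in (0:ℝ)..1, cusumDrift t x * postChangeKernel t s x =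
        t ^ 2 * (1 - t) * (1 - t + 2 * t ^ 2) / 6 * (1 - s) ^ 2 - t ^ 2 / 6 * (1 - s) ^ 4 := by
    intro s hs
    rw [cusumDrift_of_ge hs.1, integral_cusumDrift_mul_postChangeKernel_of_ge ht₀ hs.1 hs.2]
    ring
  rw [integral_eq_add_of_eqOn_Icc ht₀ ht₁ (by fun_prop) (by fun_prop) hlo hhi,
    integral_sub (Continuous.intervalIntegrable (by fun_prop) _ _)
      (Continuous.intervalIntegrable (by fun_prop) _ _)]
  simp only [integral_const_mul, integral_pow, integral_one_sub_pow]
  ring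
end
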